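/- arXiv:2503.13711 — 4 statements merged into one kernel-verified Lean document; each statement's English description precedes it below -/
import Mathlib

section
/- Let $A, B \in \mathbb{C}^{2\times 2}$ be upper triangular with diagonal entries $A = \begin{pmatrix} \tau & * \\ 0 & \mu \end{pmatrix}$, $B = \begin{pmatrix} \kappa & * \\ 0 & \nu \end{pmatrix}$, with $\kappa\mu - \nu\tau \neq 0$ and $(\mu,\nu) \neq (0,0)$. Then there exist unitary matrices $P, \dot{P} \in \mathbb{C}^{2\times 2}$ such that $PA\dot{P}$ and $PB\dot{P}$ are upper triangular with $(PA\dot{P})_{11} \cdot \nu = (PB\dot{P})_{11} \cdot \mu$ and $(PA\dot{P})_{22} \cdot \kappa = (PB\dot{P})_{22} \cdot \tau$. -/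
open Matrix Complex

local notation "conj'" => starRingEnd ℂ

set_option maxHeartbeats 1000000 in
/-- Operation 3 (pole swapping) on a 2×2 upper triangular pencil: a unitary equivalence
exists swapping the two poles τ/κ and μ/ν. -/
theorem stmt_3 (τ μ κ ν x y : ℂ) (hdet : κ * μ - ν * τ ≠ 0) (hμν : ¬(μ = 0 ∧ ν = 0)) :
    ∃ P Pdot : Matrix (Fin 2) (Fin 2) ℂ,
      P ∈ Matrix.unitaryGroup (Fin 2) ℂ ∧ Pdot ∈ Matrix.unitaryGroup (Fin 2) ℂ ∧
      (P * !![τ, x; 0, μ] * Pdot) 1 0 = 0 ∧ (P * !![κ, y; 0, ν] * Pdot) 1 0 = 0 ∧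
      (P * !![τ, x; 0, μ] * Pdot) 0 0 * ν = (P * !![κ, y; 0, ν] * Pdot) 0 0 * μ ∧
      (P * !![τ, x; 0, μ] * Pdot) 1 1 * κ = (P * !![κ, y; 0, ν] * Pdot) 1 1 * τ := by
  obtain ⟨c, hc⟩ : ∃ c : ℂ, c = ν * x - μ * y := ⟨_, rfl⟩
  obtain ⟨d, hd⟩ : ∃ d : ℂ, d = ν * τ - μ * κ := ⟨_, rfl⟩
  have hd0 : d ≠ 0 := by
    intro h; apply hdet; rw [hd] at h; linear_combination -h
  obtain ⟨w0, hw0⟩ : ∃ w0 : ℂ,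
      w0 = conj' μ * (x * d - τ * c) + conj' ν * (y * d - κ * c) := ⟨_, rfl⟩
  obtain ⟨w1, hw1⟩ : ∃ w1 : ℂ, w1 = (conj' μ * μ + conj' ν * ν) * d := ⟨_, rfl⟩
  have ht : conj' μ * μ + conj' ν * ν ≠ 0 := by
    have h1 : conj' μ * μ + conj' ν * ν = ((normSq μ + normSq ν : ℝ) : ℂ) := by
      push_cast [← Complex.normSq_eq_conj_mul_self]; ring
    rw [h1]
    norm_cast
    rcases not_and_or.mp hμν with h | h
    · have := Complex.normSq_pos.mpr h
      have := Complex.normSq_nonneg ν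
      linarith
    · have := Complex.normSq_pos.mpr h
      have := Complex.normSq_nonneg μ
      linarith
  have hw10 : w1 ≠ 0 := hw1 ▸ mul_ne_zero ht hd0
  obtain ⟨r, hrdef⟩ : ∃ r : ℝ, r = Real.sqrt (normSq c + normSq d) := ⟨_, rfl⟩
  obtain ⟨s, hsdef⟩ : ∃ s : ℝ, s = Real.sqrt (normSq w0 + normSq w1) := ⟨_, rfl⟩
  have hr0 : 0 < r := by
    rw [hrdef]
    exact Real.sqrt_pos.mpr (by
      have := Complex.normSq_pos.mpr hd0; have := Complex.normSq_nonneg c; linarith)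
  have hs0 : 0 < s := by
    rw [hsdef]
    exact Real.sqrt_pos.mpr (by
      have := Complex.normSq_pos.mpr hw10; have := Complex.normSq_nonneg w0; linarith)
  have hrC : conj' c * c + conj' d * d = (r : ℂ) * r := by
    have h2 : (r:ℝ) * r = normSq c + normSq d := by
      rw [hrdef]
      exact Real.mul_self_sqrt (by have := Complex.normSq_nonneg c; have := Complex.normSq_nonneg d; linarith)
    rw [← Complex.normSq_eq_conj_mul_self, ← Complex.normSq_eq_conj_mul_self]
    norm_cast
    exact h2.symm
  have hsC : conj' w0 * w0 + conj' w1 * w1 = (s : ℂ) * s := by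
    have h2 : (s:ℝ) * s = normSq w0 + normSq w1 := by
      rw [hsdef]
      exact Real.mul_self_sqrt (by have := Complex.normSq_nonneg w0; have := Complex.normSq_nonneg w1; linarith)
    rw [← Complex.normSq_eq_conj_mul_self, ← Complex.normSq_eq_conj_mul_self]
    norm_cast
    exact h2.symm
  have hrC0 : (r : ℂ) ≠ 0 := by exact_mod_cast hr0.ne'
  have hsC0 : (s : ℂ) ≠ 0 := by exact_mod_cast hs0.ne'
  refine ⟨((s:ℂ))⁻¹ • !![conj' w0, conj' w1; -w1, w0],
          ((r:ℂ))⁻¹ • !![-c, -conj' d; d, -conj' c], ?_, ?_, ?_, ?_, ?_, ?_⟩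
  · rw [Matrix.mem_unitaryGroup_iff]
    ext i j
    fin_cases i <;> fin_cases j <;>
      · simp only [Matrix.smul_mul, Matrix.mul_smul, Matrix.smul_apply, smul_eq_mul,
          Matrix.mul_apply, Fin.sum_univ_two, star_smul, Matrix.star_apply,
          Matrix.conjTranspose_apply, Complex.star_def, _root_.map_mul, map_add, map_neg,
          map_inv₀, Complex.conj_conj, Complex.conj_ofReal, Matrix.cons_val', Matrix.of_apply, Matrix.cons_val_zero,
          Matrix.cons_val_one, Matrix.head_cons, Matrix.head_fin_const, Matrix.empty_val',
          Matrix.cons_val_fin_one, Matrix.one_apply_eq, Matrix.one_apply, Fin.mk_zero, Fin.mk_one, zero_ne_one, one_ne_zero, if_false]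
        field_simp
        first
        | linear_combination -hsC
        | linear_combination hsC
        | ring
  · rw [Matrix.mem_unitaryGroup_iff]
    ext i j
    fin_cases i <;> fin_cases j <;>
      · simp only [Matrix.smul_mul, Matrix.mul_smul, Matrix.smul_apply, smul_eq_mul,
          Matrix.mul_apply, Fin.sum_univ_two, star_smul, Matrix.star_apply,
          Matrix.conjTranspose_apply, Complex.star_def, _root_.map_mul, map_add, map_neg,
          map_inv₀, Complex.conj_conj, Complex.conj_ofReal, Matrix.cons_val', Matrix.of_apply, Matrix.cons_val_zero,
          Matrix.cons_val_one, Matrix.head_cons, Matrix.head_fin_const, Matrix.empty_val',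
          Matrix.cons_val_fin_one, Matrix.one_apply_eq, Matrix.one_apply, Fin.mk_zero, Fin.mk_one, zero_ne_one, one_ne_zero, if_false]
        field_simp
        first
        | linear_combination -hrC
        | linear_combination hrC
        | ring
  · simp only [Matrix.smul_mul, Matrix.mul_smul, Matrix.smul_apply, smul_eq_mul,
      Matrix.mul_apply, Fin.sum_univ_two, Matrix.cons_val', Matrix.of_apply, Matrix.cons_val_zero,
      Matrix.cons_val_one, Matrix.head_cons, Matrix.head_fin_const, Matrix.empty_val',
      Matrix.cons_val_fin_one, Fin.isValue]
    field_simp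
    rw [hw0, hw1, hc, hd]
    ring
  · simp only [Matrix.smul_mul, Matrix.mul_smul, Matrix.smul_apply, smul_eq_mul,
      Matrix.mul_apply, Fin.sum_univ_two, Matrix.cons_val', Matrix.of_apply, Matrix.cons_val_zero,
      Matrix.cons_val_one, Matrix.head_cons, Matrix.head_fin_const, Matrix.empty_val',
      Matrix.cons_val_fin_one, Fin.isValue]
    field_simp
    rw [hw0, hw1, hc, hd]
    ring
  · simp only [Matrix.smul_mul, Matrix.mul_smul, Matrix.smul_apply, smul_eq_mul,
      Matrix.mul_apply, Fin.sum_univ_two, Matrix.cons_val', Matrix.of_apply, Matrix.cons_val_zero,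
      Matrix.cons_val_one, Matrix.head_cons, Matrix.head_fin_const, Matrix.empty_val',
      Matrix.cons_val_fin_one, Fin.isValue]
    field_simp
    rw [hw0, hw1, hc, hd]
    ring
  · simp only [Matrix.smul_mul, Matrix.mul_smul, Matrix.smul_apply, smul_eq_mul,
      Matrix.mul_apply, Fin.sum_univ_two, Matrix.cons_val', Matrix.of_apply, Matrix.cons_val_zero,
      Matrix.cons_val_one, Matrix.head_cons, Matrix.head_fin_const, Matrix.empty_val',
      Matrix.cons_val_fin_one, Fin.isValue]
    field_simp
    rw [hw0, hw1, hc, hd]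
    ring
end

section
/- Let $A = \begin{pmatrix} \delta & 0 \\ \gamma & \eta \end{pmatrix}$ and $B = \begin{pmatrix} \beta & 0 \\ \alpha & \zeta \end{pmatrix}$ with $(\delta,\beta) \neq (0,0)$ and $\beta\eta - \delta\zeta \neq 0$, $\beta\gamma - \delta\alpha$ arbitrary. Then there exist unitary $P, \dot{P} \in \mathbb{C}^{2\times 2}$ and a nonzero scalar $u \in \mathbb{C}$ such that $PA\dot{P}$ and $PB\dot{P}$ are upper triangular with $(PA\dot{P})_{11} = u\delta$ and $(PB\dot{P})_{11} = u\beta$. -/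
open Complex Matrix

/-- A 2×2 matrix built from a unit vector `(a, b)` is unitary. -/
lemma aux_unitary (a b : ℂ) (h : ((Complex.normSq a : ℝ) : ℂ) + ((Complex.normSq b : ℝ) : ℂ) = 1) :
    !![a, -(starRingEnd ℂ) b; b, (starRingEnd ℂ) a] ∈ Matrix.unitaryGroup (Fin 2) ℂ := by
  rw [Matrix.mem_unitaryGroup_iff]
  ext i j
  fin_cases i <;> fin_cases j <;>
    simp [Matrix.mul_apply, Fin.sum_univ_two, Matrix.one_apply, Matrix.star_apply,
      Complex.mul_conj, Complex.mul_conj'] <;>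
    first | linear_combination h | ring

/-- Master computation: if `q = (q1, q2)` is a common "pole" direction, so that both columns
`A·q` and `B·q` are the multiples `δ·k` and `β·k` of a common vector `w = (w1, w2)`, then the
normalized rotations built from `q` (on the right) and `w` (on the left) triangularize the
pencil while preserving the ratio of the `(1,1)` entries. -/
lemma aux_master (δ γ η β α ζ q1 q2 w1 w2 k : ℂ) (hq1 : q1 ≠ 0) (hw1 : w1 ≠ 0) (hk : k ≠ 0)
    (hA1 : δ * q1 = δ * (k * w1)) (hA2 : γ * q1 + η * q2 = δ * (k * w2))
    (hB1 : β * q1 = β * (k * w1)) (hB2 : α * q1 + ζ * q2 = β * (k * w2)) :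
    ∃ P Pdot : Matrix (Fin 2) (Fin 2) ℂ, ∃ u : ℂ,
      P ∈ Matrix.unitaryGroup (Fin 2) ℂ ∧ Pdot ∈ Matrix.unitaryGroup (Fin 2) ℂ ∧ u ≠ 0 ∧
      (P * !![δ, 0; γ, η] * Pdot) 1 0 = 0 ∧ (P * !![β, 0; α, ζ] * Pdot) 1 0 = 0 ∧
      (P * !![δ, 0; γ, η] * Pdot) 0 0 = u * δ ∧
      (P * !![β, 0; α, ζ] * Pdot) 0 0 = u * β := by
  set nr : ℝ := Real.sqrt (Complex.normSq q1 + Complex.normSq q2) with hnr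
  set cr : ℝ := Real.sqrt (Complex.normSq w1 + Complex.normSq w2) with hcr
  have hqpos : 0 < Complex.normSq q1 + Complex.normSq q2 :=
    add_pos_of_pos_of_nonneg (Complex.normSq_pos.2 hq1) (Complex.normSq_nonneg _)
  have hwpos : 0 < Complex.normSq w1 + Complex.normSq w2 :=
    add_pos_of_pos_of_nonneg (Complex.normSq_pos.2 hw1) (Complex.normSq_nonneg _)
  have hn0 : 0 < nr := Real.sqrt_pos.2 hqpos
  have hc0 : 0 < cr := Real.sqrt_pos.2 hwpos
  have hn2 : nr * nr = Complex.normSq q1 + Complex.normSq q2 := Real.mul_self_sqrt hqpos.le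
  have hc2 : cr * cr = Complex.normSq w1 + Complex.normSq w2 := Real.mul_self_sqrt hwpos.le
  have hnC : (nr : ℂ) ≠ 0 := by exact_mod_cast hn0.ne'
  have hcC : (cr : ℂ) ≠ 0 := by exact_mod_cast hc0.ne'
  have e1 : (starRingEnd ℂ) w1 * w1 = ((Complex.normSq w1 : ℝ) : ℂ) := by
    rw [mul_comm, Complex.mul_conj]
  have e2 : (starRingEnd ℂ) w2 * w2 = ((Complex.normSq w2 : ℝ) : ℂ) := by
    rw [mul_comm, Complex.mul_conj]
  have hcc : (starRingEnd ℂ) w1 * w1 + (starRingEnd ℂ) w2 * w2 = (cr : ℂ) * (cr : ℂ) := by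
    rw [e1, e2, ← Complex.ofReal_mul, hc2]; push_cast; ring
  refine ⟨!![(starRingEnd ℂ) (w1 / cr), -(starRingEnd ℂ) (-(w2 / cr));
              -(w2 / cr), (starRingEnd ℂ) ((starRingEnd ℂ) (w1 / cr))],
          !![q1 / nr, -(starRingEnd ℂ) (q2 / nr); q2 / nr, (starRingEnd ℂ) (q1 / nr)],
          k * cr / nr, aux_unitary _ _ ?_, aux_unitary _ _ ?_, ?_, ?_, ?_, ?_, ?_⟩
  · rw [Complex.normSq_conj, Complex.normSq_neg, Complex.normSq_div, Complex.normSq_div,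
      Complex.normSq_ofReal]
    have hne : Complex.normSq w1 + Complex.normSq w2 ≠ 0 := hwpos.ne'
    push_cast
    field_simp
    exact_mod_cast hc2.symm.trans (sq cr).symm
  · rw [Complex.normSq_div, Complex.normSq_div, Complex.normSq_ofReal]
    have hne : Complex.normSq q1 + Complex.normSq q2 ≠ 0 := hqpos.ne'
    push_cast
    field_simp
    exact_mod_cast hn2.symm.trans (sq nr).symm
  · exact div_ne_zero (mul_ne_zero hk hcC) hnC
  · simp [Matrix.mul_apply, Fin.sum_univ_two]
    linear_combination (-(w2 / ((cr : ℂ) * nr))) * hA1 + (w1 / ((cr : ℂ) * nr)) * hA2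
  · simp [Matrix.mul_apply, Fin.sum_univ_two]
    linear_combination (-(w2 / ((cr : ℂ) * nr))) * hB1 + (w1 / ((cr : ℂ) * nr)) * hB2
  · simp [Matrix.mul_apply, Fin.sum_univ_two]
    field_simp
    linear_combination ((starRingEnd ℂ) w1 * hA1 + (starRingEnd ℂ) w2 * hA2 + δ * k * hcc)
  · simp [Matrix.mul_apply, Fin.sum_univ_two]
    field_simp
    linear_combination ((starRingEnd ℂ) w1 * hB1 + (starRingEnd ℂ) w2 * hB2 + β * k * hcc)

/-- Operation 1 (element elimination with pole preservation): the subdiagonal entries of the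
2×2 pencil can be eliminated by a unitary equivalence preserving the ratio of the (1,1)
entries up to a common nonzero scalar `u`. -/
theorem stmt_4 (δ γ η β α ζ : ℂ) (hδβ : ¬(δ = 0 ∧ β = 0)) (h : β * η - δ * ζ ≠ 0) :
    ∃ P Pdot : Matrix (Fin 2) (Fin 2) ℂ, ∃ u : ℂ,
      P ∈ Matrix.unitaryGroup (Fin 2) ℂ ∧ Pdot ∈ Matrix.unitaryGroup (Fin 2) ℂ ∧ u ≠ 0 ∧
      (P * !![δ, 0; γ, η] * Pdot) 1 0 = 0 ∧ (P * !![β, 0; α, ζ] * Pdot) 1 0 = 0 ∧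
      (P * !![δ, 0; γ, η] * Pdot) 0 0 = u * δ ∧
      (P * !![β, 0; α, ζ] * Pdot) 0 0 = u * β := by
  have hq1 : δ * ζ - β * η ≠ 0 := fun h0 => h (by linear_combination -h0)
  by_cases hδ : δ = 0
  · have hβ : β ≠ 0 := fun hβ => hδβ ⟨hδ, hβ⟩
    refine aux_master δ γ η β α ζ (δ * ζ - β * η) (β * γ - δ * α)
      (β * (δ * ζ - β * η)) (α * (δ * ζ - β * η) + ζ * (β * γ - δ * α)) (1 / β) hq1
      (mul_ne_zero hβ hq1) (one_div_ne_zero hβ) ?_ ?_ ?_ ?_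
    · rw [hδ]; ring
    · rw [hδ]; ring
    · field_simp
    · field_simp
  · refine aux_master δ γ η β α ζ (δ * ζ - β * η) (β * γ - δ * α)
      (δ * (δ * ζ - β * η)) (γ * (δ * ζ - β * η) + η * (β * γ - δ * α)) (1 / δ) hq1
      (mul_ne_zero hδ hq1) (one_div_ne_zero hδ) ?_ ?_ ?_ ?_
    · field_simp
    · field_simp
    · field_simp
      try ring
    · field_simp
      try ring
end

section
/- Let $J_s \in \mathbb{C}^{(s+1)\times(s+1)}$ be upper bidiagonal with constant diagonal $z$ and superdiagonal entries $\alpha_s, \alpha_{s-1}, \dots, \alpha_1$ (in rows $1$ through $s$), and let $w = w_0 e_{s+1}$ (last standard basis vector scaled by $w_0$). Then for any polynomial $p$, the vector $p(J_s) w$ has $i$-th entry equal to $w_0 \cdot \frac{p^{(s+1-i)}(z)}{(s+1-i)!} \prod_{r=1}^{s+1-i} \alpha_r$ for $i = 1, \dots, s+1$. -/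
open Polynomial Matrix

lemma iter_deriv_X_mul (k : ℕ) (p : ℂ[X]) :
    derivative^[k+1] (X * p) =
      ((k + 1 : ℕ) : ℂ[X]) * derivative^[k] p + X * derivative^[k+1] p := by
  induction k with
  | zero => simp [derivative_mul]
  | succ k ih =>
      rw [Function.iterate_succ_apply' derivative (k+1) (X*p), ih]
      simp only [derivative_add, derivative_mul, Polynomial.derivative_natCast,
        derivative_X, ← Function.iterate_succ_apply' derivative]
      push_cast
      ring

lemma iter_derivative_add' (k : ℕ) (p q : ℂ[X]) :
    Polynomial.derivative^[k] (p + q) =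
      Polynomial.derivative^[k] p + Polynomial.derivative^[k] q := by
  induction k with
  | zero => rfl
  | succ k ih =>
      simp only [Function.iterate_succ_apply', ih, derivative_add]

lemma mulVec_entry (s : ℕ) (z : ℂ) (α : ℕ → ℂ)
    (J : Matrix (Fin (s + 1)) (Fin (s + 1)) ℂ)
    (hdiag : ∀ i : Fin (s + 1), J i i = z)
    (hsup : ∀ i j : Fin (s + 1), (i : ℕ) + 1 = (j : ℕ) → J i j = α (s - (i : ℕ)))
    (hzero : ∀ i j : Fin (s + 1), ¬((i : ℕ) = (j : ℕ) ∨ (i : ℕ) + 1 = (j : ℕ)) → J i j = 0)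
    (u : Fin (s+1) → ℂ) (i : Fin (s+1)) :
    J.mulVec u i = z * u i +
      if h : (i : ℕ) < s then α (s - (i : ℕ)) * u ⟨(i : ℕ) + 1, by omega⟩ else 0 := by
  rw [Matrix.mulVec]
  show ∑ j, J i j * u j = _
  by_cases h : (i : ℕ) < s
  · have hne : i ≠ (⟨(i : ℕ) + 1, by omega⟩ : Fin (s+1)) := by
      intro hx; have := congrArg Fin.val hx; simp at this
    rw [← Finset.sum_subset (Finset.subset_univ {i, ⟨(i : ℕ) + 1, by omega⟩})]
    · rw [Finset.sum_pair hne, hdiag, hsup i _ (by simp)]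
      simp [h]
    · intro j _ hj
      simp only [Finset.mem_insert, Finset.mem_singleton] at hj
      push_neg at hj
      obtain ⟨hj1, hj2⟩ := hj
      rw [hzero i j ?_, zero_mul]
      rintro (h1 | h1)
      · exact hj1 (Fin.ext h1.symm)
      · exact hj2 (Fin.ext h1.symm)
  · rw [Finset.sum_eq_single i]
    · rw [hdiag]; simp [h]
    · intro j _ hj
      rw [hzero i j ?_, zero_mul]
      rintro (h1 | h1)
      · exact hj (Fin.ext h1.symm)
      · have := j.isLt; omega
    · simp

/-- Action of `p(J_s)` on the weight vector `w = w₀ e_{s+1}` for a Jordan-like block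
(0-indexed: diagonal `z`, superdiagonal `J i (i+1) = α (s - i)`): the `i`-th entry of
`p(J_s) w` is `w₀ · p^{(s-i)}(z)/(s-i)! · ∏_{r=1}^{s-i} α_r`. -/
theorem stmt_12 (s : ℕ) (z w₀ : ℂ) (α : ℕ → ℂ)
    (J : Matrix (Fin (s + 1)) (Fin (s + 1)) ℂ)
    (hdiag : ∀ i : Fin (s + 1), J i i = z)
    (hsup : ∀ i j : Fin (s + 1), (i : ℕ) + 1 = (j : ℕ) → J i j = α (s - (i : ℕ)))
    (hzero : ∀ i j : Fin (s + 1), ¬((i : ℕ) = (j : ℕ) ∨ (i : ℕ) + 1 = (j : ℕ)) → J i j = 0) :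
    ∀ p : Polynomial ℂ, ∀ i : Fin (s + 1),
      ((Polynomial.aeval J p).mulVec (Pi.single (Fin.last s) w₀)) i =
        w₀ * ((Polynomial.derivative^[s - (i : ℕ)] p).eval z / (Nat.factorial (s - (i : ℕ)) : ℂ)) *
          ∏ r ∈ Finset.range (s - (i : ℕ)), α (r + 1) := by
  have key : ∀ p : ℂ[X],
      (∀ i : Fin (s + 1), ((aeval J p).mulVec (Pi.single (Fin.last s) w₀)) i =
        w₀ * ((derivative^[s - (i : ℕ)] p).eval z / (Nat.factorial (s - (i : ℕ)) : ℂ)) *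
          ∏ r ∈ Finset.range (s - (i : ℕ)), α (r + 1)) →
      (∀ i : Fin (s + 1), ((aeval J (X * p)).mulVec (Pi.single (Fin.last s) w₀)) i =
        w₀ * ((derivative^[s - (i : ℕ)] (X * p)).eval z / (Nat.factorial (s - (i : ℕ)) : ℂ)) *
          ∏ r ∈ Finset.range (s - (i : ℕ)), α (r + 1)) := by
    intro p hp i
    rw [_root_.map_mul, aeval_X, ← Matrix.mulVec_mulVec,
      mulVec_entry s z α J hdiag hsup hzero, hp i]
    by_cases h : (i : ℕ) < s
    · rw [dif_pos h, hp ⟨(i : ℕ) + 1, by omega⟩]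
      have h2 : s - ((⟨(i : ℕ) + 1, by omega⟩ : Fin (s+1)) : ℕ) = s - (i : ℕ) - 1 := rfl
      rw [h2]
      set k := s - (i : ℕ) with hk
      obtain ⟨m, hm⟩ : ∃ m, k = m + 1 := ⟨k - 1, by omega⟩
      rw [hm]
      simp only [Nat.add_sub_cancel]
      rw [iter_deriv_X_mul, Finset.prod_range_succ]
      simp only [eval_add, eval_mul, eval_natCast, eval_X, Nat.factorial_succ,
        Nat.cast_mul]
      have hf : (Nat.factorial m : ℂ) ≠ 0 := Nat.cast_ne_zero.mpr (Nat.factorial_ne_zero m)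
      have hf2 : ((m : ℂ) + 1) ≠ 0 := by exact_mod_cast Nat.succ_ne_zero m
      push_cast
      field_simp
      ring
    · rw [dif_neg h]
      have h0 : s - (i : ℕ) = 0 := by omega
      simp only [h0, Function.iterate_zero, id_eq, eval_mul, eval_X,
        Nat.factorial_zero, Nat.cast_one, Finset.range_zero, Finset.prod_empty]
      ring
  intro p
  induction p using Polynomial.induction_on with
  | C a =>
      intro i
      rw [aeval_C]
      have halg : (algebraMap ℂ (Matrix (Fin (s+1)) (Fin (s+1)) ℂ) a) = a • 1 := by
        simp [Algebra.algebraMap_eq_smul_one]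
      rw [halg, Matrix.smul_mulVec, Matrix.one_mulVec]
      by_cases h : i = Fin.last s
      · subst h
        simp only [Pi.smul_apply, Pi.single_eq_same, smul_eq_mul, Fin.val_last,
          Nat.sub_self, Function.iterate_zero, id_eq, eval_C, Nat.factorial_zero,
          Nat.cast_one, Finset.range_zero, Finset.prod_empty]
        ring
      · have h1 : (i : ℕ) < s := by
          have h2 := i.isLt
          have h3 : (i : ℕ) ≠ s := fun hh => h (Fin.ext hh)
          omega
        have h2 : 0 < s - (i : ℕ) := by omega
        rw [Polynomial.iterate_derivative_C h2]
        simp [Pi.single_apply, h]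
  | add p q hp hq =>
      intro i
      simp only [map_add, Matrix.add_mulVec, Pi.add_apply, hp i, hq i,
        iter_derivative_add', eval_add]
      ring
  | monomial n a hn =>
      have heq : (C a) * X ^ (n + 1) = X * (C a * X ^ n) := by ring
      rw [heq]
      exact key _ hn
end

section
/- Let $J$ be the block diagonal matrix with blocks $J_{s_j}$ as in the Jordan-like structure (diagonal $z_j$, superdiagonal $\alpha^{(j)}_{s_j}, \dots, \alpha^{(j)}_1$), and let $w$ be the vector with entry $w_j$ in the last position of each block and zeros elsewhere. Then for polynomials $p, q$, the Euclidean inner product satisfies $\langle p(J)w, q(J)w \rangle = \sum_{j=1}^{\sigma} \sum_{i=0}^{s_j} |w_j|^2 \left| \frac{\prod_{r=1}^{i} \alpha_r^{(j)}}{i!} \right|^2 p^{(i)}(z_j) \overline{q^{(i)}(z_j)}$. -/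
open Polynomial

private lemma iterDeriv_add (k : ℕ) (p q : Polynomial ℂ) :
    derivative^[k] (p + q) = derivative^[k] p + derivative^[k] q := by
  induction k generalizing p q with
  | zero => rfl
  | succ k ih => simp [Function.iterate_succ_apply, derivative_add, ih]

private lemma iterDeriv_X_mul (k : ℕ) (p : Polynomial ℂ) :
    derivative^[k] (X * p) = X * derivative^[k] p + k • derivative^[k - 1] p := by
  induction k generalizing p with
  | zero => simp
  | succ m ih =>
    have h1 : derivative^[m + 1] (X * p) = derivative^[m] (p + X * derivative p) := by
      rw [Function.iterate_succ_apply]; congr 1; simp [derivative_mul]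
    rw [h1, iterDeriv_add, ih (derivative p)]
    cases m with
    | zero => simp; ring
    | succ n =>
      have h2 : derivative^[n + 1] (derivative p) = derivative^[n + 2] p :=
        (Function.iterate_succ_apply _ _ _).symm
      have h3 : derivative^[n] (derivative p) = derivative^[n + 1] p :=
        (Function.iterate_succ_apply _ _ _).symm
      rw [Nat.succ_sub_one, Nat.succ_sub_one, h2, h3, succ_nsmul]
      ring

private lemma term_eq (w c P Q : ℂ) :
    star (w * c * Q) * (w * c * P) =
      ((‖w‖ ^ 2 : ℝ) : ℂ) * ((‖c‖ ^ 2 : ℝ) : ℂ) * (P * star Q) := by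
  have hw : ((‖w‖ ^ 2 : ℝ) : ℂ) = w * (starRingEnd ℂ) w := by
    push_cast; rw [Complex.mul_conj']
  have hc : ((‖c‖ ^ 2 : ℝ) : ℂ) = c * (starRingEnd ℂ) c := by
    push_cast; rw [Complex.mul_conj']
  rw [hw, hc]
  simp only [Complex.star_def, map_mul]
  ring

/-- Core identity of Theorem 2.2 (polynomial case): the Euclidean inner product of
`p(J) w` and `q(J) w`, for the Jordan-like block diagonal matrix `J` and weight vector `w`,
equals the discretized Sobolev inner product with nodes `z_j`, weights `w_j`, derivative
orders `s_j` and derivative weights from the superdiagonal entries `α_r^{(j)}`. -/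
theorem stmt_13 (σ : ℕ) (s : Fin σ → ℕ) (z : Fin σ → ℂ) (wt : Fin σ → ℂ)
    (α : Fin σ → ℕ → ℂ)
    (B : (j : Fin σ) → Matrix (Fin (s j + 1)) (Fin (s j + 1)) ℂ)
    (hdiag : ∀ j, ∀ i : Fin (s j + 1), B j i i = z j)
    (hsup : ∀ j, ∀ i i' : Fin (s j + 1), (i : ℕ) + 1 = (i' : ℕ) → B j i i' = α j (s j - (i : ℕ)))
    (hzero : ∀ j, ∀ i i' : Fin (s j + 1),
      ¬((i : ℕ) = (i' : ℕ) ∨ (i : ℕ) + 1 = (i' : ℕ)) → B j i i' = 0)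
    (w : (Σ j, Fin (s j + 1)) → ℂ)
    (hw : ∀ x : Σ j, Fin (s j + 1), w x = if x.2 = Fin.last (s x.1) then wt x.1 else 0) :
    ∀ p q : Polynomial ℂ,
      (∑ i : Σ j, Fin (s j + 1),
          star (((Polynomial.aeval (Matrix.blockDiagonal' B) q).mulVec w) i) *
            ((Polynomial.aeval (Matrix.blockDiagonal' B) p).mulVec w) i) =
        ∑ j : Fin σ, ∑ i ∈ Finset.range (s j + 1),
          (‖wt j‖ ^ 2 : ℝ) *
            (‖(∏ r ∈ Finset.range i, α j (r + 1)) / (Nat.factorial i : ℂ)‖ ^ 2 : ℝ) *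
            ((Polynomial.derivative^[i] p).eval (z j) *
              star ((Polynomial.derivative^[i] q).eval (z j))) := by
  set J := Matrix.blockDiagonal' B with hJ
  set F : Polynomial ℂ → (Σ j, Fin (s j + 1)) → ℂ := fun p x =>
    wt x.1 * ((∏ r ∈ Finset.range (s x.1 - (x.2 : ℕ)), α x.1 (r + 1)) /
      ((Nat.factorial (s x.1 - (x.2 : ℕ)) : ℂ))) *
      (derivative^[s x.1 - (x.2 : ℕ)] p).eval (z x.1) with hF
  -- step 1: action of J on a vector
  have hmul : ∀ (v : (Σ j, Fin (s j + 1)) → ℂ) (j : Fin σ) (i : Fin (s j + 1)),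
      J.mulVec v ⟨j, i⟩ = z j * v ⟨j, i⟩ +
        (if h : (i : ℕ) < s j then α j (s j - (i : ℕ)) * v ⟨j, ⟨(i : ℕ) + 1, by omega⟩⟩
          else 0) := by
    intro v j i
    rw [Matrix.mulVec, dotProduct, ← Finset.univ_sigma_univ, Finset.sum_sigma]
    have hsingle : (∑ j' : Fin σ, ∑ i' : Fin (s j' + 1), J ⟨j, i⟩ ⟨j', i'⟩ * v ⟨j', i'⟩)
        = ∑ i' : Fin (s j + 1), J ⟨j, i⟩ ⟨j, i'⟩ * v ⟨j, i'⟩ := by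
      apply Finset.sum_eq_single j
      · intro j' _ hj'
        apply Finset.sum_eq_zero
        intro i' _
        have hz : J ⟨j, i⟩ ⟨j', i'⟩ = 0 := by
          rw [hJ, Matrix.blockDiagonal'_apply, dif_neg hj'.symm]
        rw [hz, zero_mul]
      · intro h; exact absurd (Finset.mem_univ j) h
    rw [hsingle]
    have hB : ∀ i' : Fin (s j + 1), J ⟨j, i⟩ ⟨j, i'⟩ * v ⟨j, i'⟩ =
        (if i' = i then z j * v ⟨j, i⟩ else 0) +
        (if (i : ℕ) + 1 = (i' : ℕ) then α j (s j - (i : ℕ)) * v ⟨j, i'⟩ else 0) := by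
      intro i'
      rw [hJ, Matrix.blockDiagonal'_apply_eq]
      by_cases h1 : i' = i
      · subst h1
        rw [hdiag j i']
        have hne : ¬ ((i' : ℕ) + 1 = (i' : ℕ)) := by omega
        simp [hne]
      · by_cases h2 : (i : ℕ) + 1 = (i' : ℕ)
        · rw [hsup j i i' h2]
          simp [h1, h2]
        · have hz : B j i i' = 0 := by
            apply hzero j i i'
            push_neg
            exact ⟨fun hc => h1 (Fin.ext hc.symm), h2⟩
          rw [hz]
          simp [h1, h2]
    simp only [hB]
    rw [Finset.sum_add_distrib]
    congr 1
    · simp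
    · by_cases h : (i : ℕ) < s j
      · rw [dif_pos h]
        have hcond : ∀ i' : Fin (s j + 1),
            ((i : ℕ) + 1 = (i' : ℕ)) ↔ i' = ⟨(i : ℕ) + 1, by omega⟩ := by
          intro i'
          constructor
          · intro hc; exact Fin.ext (by simp [← hc])
          · intro hc; subst hc; simp
        simp only [hcond]
        simp
      · rw [dif_neg h]
        apply Finset.sum_eq_zero
        intro i' _
        rw [if_neg]
        have := i'.isLt
        omega
  -- step 2: closed form for `p(J) w`
  have hkey : ∀ p : Polynomial ℂ, ∀ x : Σ j, Fin (s j + 1),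
      (Polynomial.aeval J p).mulVec w x = F p x := by
    intro p
    induction p using Polynomial.induction_on with
    | C a =>
      intro x
      obtain ⟨j, i⟩ := x
      rw [Polynomial.aeval_C, Algebra.algebraMap_eq_smul_one, Matrix.smul_mulVec,
        Matrix.one_mulVec]
      simp only [Pi.smul_apply, smul_eq_mul, hw, hF]
      by_cases h : i = Fin.last (s j)
      · subst h
        simp [mul_comm]
      · have hi : (i : ℕ) < s j := by
          have h1 := i.isLt
          have h2 : (i : ℕ) ≠ s j := fun hc => h (Fin.ext (by simp [hc]))
          omega
        have hpos : 0 < s j - (i : ℕ) := by omega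
        rw [Polynomial.iterate_derivative_C hpos]
        simp [h]
    | add p q hp hq =>
      intro x
      rw [map_add, Matrix.add_mulVec]
      simp only [Pi.add_apply, hp x, hq x, hF, iterDeriv_add, Polynomial.eval_add]
      ring
    | monomial n a ih =>
      have hX : ∀ r : Polynomial ℂ, (∀ x, (Polynomial.aeval J r).mulVec w x = F r x) →
          ∀ x, (Polynomial.aeval J (X * r)).mulVec w x = F (X * r) x := by
        intro r hr x
        obtain ⟨j, i⟩ := x
        rw [map_mul, Polynomial.aeval_X, ← Matrix.mulVec_mulVec]
        have hfr : (Polynomial.aeval J r).mulVec w = F r := funext hr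
        rw [hfr, hmul (F r) j i]
        by_cases h : (i : ℕ) < s j
        · rw [dif_pos h]
          set m := s j - ((i : ℕ) + 1) with hm
          have hsm : s j - (i : ℕ) = m + 1 := by omega
          have hval : s j - ((⟨(i : ℕ) + 1, by omega⟩ : Fin (s j + 1)) : ℕ) = m := by
            simp only [Fin.val_mk]; rfl
          simp only [hF, hsm, hval]
          rw [iterDeriv_X_mul]
          simp only [Nat.add_sub_cancel, Polynomial.eval_add, Polynomial.eval_mul,
            Polynomial.eval_X, Polynomial.eval_smul, nsmul_eq_mul, Nat.cast_add, Nat.cast_one,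
            Polynomial.eval_natCast, Polynomial.eval_one]
          rw [Finset.prod_range_succ, Nat.factorial_succ]
          have h1 : ((Nat.factorial m : ℂ)) ≠ 0 :=
            Nat.cast_ne_zero.mpr (Nat.factorial_ne_zero m)
          have h2 : ((m : ℂ) + 1) ≠ 0 := Nat.cast_add_one_ne_zero m
          push_cast
          field_simp
        · rw [dif_neg h]
          have hi : (i : ℕ) = s j := by have := i.isLt; omega
          simp only [hF, hi, Nat.sub_self]
          simp only [Function.iterate_zero, id_eq, Polynomial.eval_mul, Polynomial.eval_X]
          ring
      rw [show (C a * X ^ (n + 1) : Polynomial ℂ) = X * (C a * X ^ n) by ring]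
      exact hX _ ih
  intro p q
  simp only [hkey p, hkey q]
  rw [← Finset.univ_sigma_univ, Finset.sum_sigma]
  apply Finset.sum_congr rfl
  intro j _
  set G : ℕ → ℂ := fun k => ((‖wt j‖ ^ 2 : ℝ) : ℂ) *
      ((‖(∏ r ∈ Finset.range k, α j (r + 1)) / (Nat.factorial k : ℂ)‖ ^ 2 : ℝ) : ℂ) *
      ((derivative^[k] p).eval (z j) * star ((derivative^[k] q).eval (z j))) with hG
  have hterm : ∀ i : Fin (s j + 1), star (F q ⟨j, i⟩) * F p ⟨j, i⟩ = G (s j - (i : ℕ)) := by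
    intro i
    simp only [hF, hG]
    exact term_eq _ _ _ _
  calc ∑ i : Fin (s j + 1), star (F q ⟨j, i⟩) * F p ⟨j, i⟩
      = ∑ i : Fin (s j + 1), G (s j - (i : ℕ)) := Finset.sum_congr rfl (fun i _ => hterm i)
    _ = ∑ i ∈ Finset.range (s j + 1), G (s j - i) :=
        Fin.sum_univ_eq_sum_range (fun n => G (s j - n)) (s j + 1)
    _ = ∑ i ∈ Finset.range (s j + 1), G i := by
        conv_rhs => rw [← Finset.sum_range_reflect]
        exact Finset.sum_congr rfl (fun i _ => by congr 1 <;> omega)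
end
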